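/- arXiv:1102.2817 — 2 statements merged into one kernel-verified Lean document; each statement's English description precedes it below -/
import Mathlib

section
/- Let k ≥ 1 be an integer and let 0 < λ ≤ μ. Then ∫_0^∞ (μ/λ)^{k/2} e^{-(μ+λ)t} (k/t) I_k(2√(μλ) t) dt = 1; in particular, t ↦ (μ/λ)^{k/2} e^{-(μ+λ)t} (k/t) I_k(2√(μλ) t) is a probability density on (0,∞). -/
open MeasureTheory

/-- The modified Bessel function of the first kind of integer order `k`:
`I_k(x) = ∑_{ℓ=0}^∞ (1/((ℓ+k)! ℓ!)) (x/2)^(2ℓ+k)`. -/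
noncomputable def besselI (k : ℕ) (x : ℝ) : ℝ :=
  ∑' ℓ : ℕ, (1 / ((Nat.factorial (ℓ + k) : ℝ) * Nat.factorial ℓ)) * (x / 2) ^ (2 * ℓ + k)

/-!
Expanding `I_k` termwise turns the integrand into a series of gamma densities. With
`p = μ/(μ+λ)` and `q = λ/(μ+λ)`, the `ℓ`-th term integrates to
`k (2ℓ+k-1)! / ((ℓ+k)! ℓ!) p^(ℓ+k) q^ℓ`, the probability that the walk on `ℤ` stepping down with
probability `p` and up with probability `q`, started at `k`, first hits `0` at time `2ℓ+k`.
Conditioning on the first step, the totals `S_k` of these probabilities satisfy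
`S_{k+1} = p S_k + q S_{k+2}` with `S_0 = 1` and `0 ≤ S_k ≤ 1`. So the increments `S_k - S_{k+1}`
grow geometrically with ratio `p/q ≥ 1`, and boundedness forces them to vanish: `S_k = 1`.
-/

open Nat Real Finset Set

theorem eq_apply_zero_of_bounded_of_recurrence {p q C : ℝ} {S : ℕ → ℝ} (hq : 0 < q) (hqp : q ≤ p)
    (hpq : p + q = 1) (hS : ∀ k, S (k + 1) = p * S k + q * S (k + 2)) (hC : ∀ k, |S k| ≤ C)
    (k : ℕ) : S k = S 0 := by
  have hdiff : ∀ k, S k - S (k + 1) = (p / q) ^ k * (S 0 - S 1) := by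
    intro k
    induction k with
    | zero => simp
    | succ k ih =>
      have hstep : q * (S (k + 1) - S (k + 1 + 1)) = p * (S k - S (k + 1)) := by
        linear_combination hS k + S (k + 1) * hpq
      rw [pow_succ, mul_right_comm, ← ih]
      field_simp
      linear_combination hstep
  have hd0 : S 0 - S 1 = 0 := by
    by_contra hd
    obtain ⟨n, hn⟩ := exists_nat_gt (2 * C / |S 0 - S 1|)
    have hgrow : n * |S 0 - S 1| ≤ |S 0 - S n| := by
      rw [← Finset.sum_range_sub' S n, Finset.sum_congr rfl fun k _ => hdiff k, ← Finset.sum_mul,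
        abs_mul]
      gcongr
      calc (n : ℝ) = ∑ _k ∈ range n, (1 : ℝ) := by simp
        _ ≤ ∑ k ∈ range n, (p / q) ^ k := by
          gcongr; exact one_le_pow₀ ((one_le_div hq).2 hqp)
        _ ≤ _ := le_abs_self _
    have hbound : |S 0 - S n| ≤ 2 * C := by linarith [abs_sub (S 0) (S n), hC 0, hC n]
    rw [div_lt_iff₀ (abs_pos.2 hd)] at hn
    linarith
  induction k with
  | zero => rfl
  | succ k ih =>
    have h := hdiff k
    rw [hd0, mul_zero] at h
    linarith

noncomputable def firstPassageProb (p q : ℝ) : ℕ → ℕ → ℝ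
  | 0, 0 => 1
  | 0, _ + 1 => 0
  | k + 1, ℓ => (k + 1) * (2 * ℓ + k)! / ((ℓ + k + 1)! * ℓ !) * p ^ (ℓ + k + 1) * q ^ ℓ

namespace firstPassageProb

variable {p q : ℝ}

theorem zero_right (k : ℕ) : firstPassageProb p q k 0 = p ^ k := by
  rcases k with _ | k
  · rfl
  · simp only [firstPassageProb, mul_zero, zero_add, factorial_succ, cast_mul, cast_add, cast_one,
      factorial_zero, mul_one, pow_zero]
    field_simp

theorem succ_succ (k ℓ : ℕ) :
    firstPassageProb p q (k + 1) (ℓ + 1) =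
      p * firstPassageProb p q k (ℓ + 1) + q * firstPassageProb p q (k + 2) ℓ := by
  rcases k with _ | k
  · simp only [firstPassageProb]
    rw [show 2 * (ℓ + 1) + 0 = 2 * ℓ + 1 + 1 by ring, show 2 * ℓ + (0 + 1) = 2 * ℓ + 1 by ring]
    push_cast [Nat.factorial_succ]
    field_simp
    ring
  · simp only [firstPassageProb]
    rw [show 2 * (ℓ + 1) + (k + 1) = 2 * ℓ + k + 2 + 1 by ring,
      show 2 * (ℓ + 1) + k = 2 * ℓ + k + 2 by ring, show 2 * ℓ + (k + 1 + 1) = 2 * ℓ + k + 2 by ring,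
      show ℓ + 1 + (k + 1) + 1 = ℓ + k + 2 + 1 by ring, show ℓ + 1 + k + 1 = ℓ + k + 2 by ring,
      show ℓ + (k + 1 + 1) + 1 = ℓ + k + 2 + 1 by ring]
    push_cast [Nat.factorial_succ]
    field_simp
    ring

theorem nonneg (hp : 0 ≤ p) (hq : 0 ≤ q) (k ℓ : ℕ) : 0 ≤ firstPassageProb p q k ℓ := by
  rcases k with _ | k <;> rcases ℓ with _ | ℓ <;> simp only [firstPassageProb] <;> positivity

theorem sum_range_le_one (hp : 0 ≤ p) (hq : 0 ≤ q) (hpq : p + q = 1) (L k : ℕ) :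
    ∑ ℓ ∈ range L, firstPassageProb p q k ℓ ≤ 1 := by
  induction L generalizing k with
  | zero => simp
  | succ L ihL =>
    induction k with
    | zero => simp [Finset.sum_range_succ', firstPassageProb]
    | succ k ihk =>
      calc ∑ ℓ ∈ range (L + 1), firstPassageProb p q (k + 1) ℓ
          = p * ∑ ℓ ∈ range (L + 1), firstPassageProb p q k ℓ
            + q * ∑ ℓ ∈ range L, firstPassageProb p q (k + 2) ℓ := by
            simp only [Finset.sum_range_succ' _ L, succ_succ, zero_right, Finset.sum_add_distrib,
              ← Finset.mul_sum, pow_succ]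
            ring
        _ ≤ p * 1 + q * 1 := by gcongr; exact ihL (k + 2)
        _ = 1 := by linarith

theorem summable (hp : 0 ≤ p) (hq : 0 ≤ q) (hpq : p + q = 1) (k : ℕ) :
    Summable (firstPassageProb p q k) :=
  summable_of_sum_range_le (nonneg hp hq k) (fun L => sum_range_le_one hp hq hpq L k)

theorem tsum_zero : ∑' ℓ, firstPassageProb p q 0 ℓ = 1 := by
  rw [tsum_eq_single 0]
  · rfl
  · rintro (_ | ℓ) h
    exacts [absurd rfl h, rfl]

theorem tsum_succ (hp : 0 ≤ p) (hq : 0 ≤ q) (hpq : p + q = 1) (k : ℕ) :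
    ∑' ℓ, firstPassageProb p q (k + 1) ℓ =
      p * ∑' ℓ, firstPassageProb p q k ℓ + q * ∑' ℓ, firstPassageProb p q (k + 2) ℓ := by
  have hk := summable hp hq hpq k
  rw [(summable hp hq hpq (k + 1)).tsum_eq_zero_add, hk.tsum_eq_zero_add]
  simp only [succ_succ, zero_right]
  rw [((summable_nat_add_iff 1).2 hk).mul_left p |>.tsum_add
      ((summable hp hq hpq (k + 2)).mul_left q), tsum_mul_left, tsum_mul_left]
  ring

theorem hasSum_one (hq : 0 < q) (hqp : q ≤ p) (hpq : p + q = 1) (k : ℕ) :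
    HasSum (firstPassageProb p q k) 1 := by
  have hp : 0 ≤ p := hq.le.trans hqp
  have hbound (k : ℕ) : |∑' ℓ, firstPassageProb p q k ℓ| ≤ 1 := by
    rw [abs_of_nonneg (tsum_nonneg (nonneg hp hq.le k))]
    exact Real.tsum_le_of_sum_range_le (nonneg hp hq.le k)
      (fun L => sum_range_le_one hp hq.le hpq L k)
  have htotal := eq_apply_zero_of_bounded_of_recurrence hq hqp hpq (tsum_succ hp hq.le hpq) hbound k
  rw [tsum_zero] at htotal
  exact htotal ▸ (summable hp hq.le hpq k).hasSum

end firstPassageProb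

theorem integral_Ioi_pow_mul_exp_neg_mul (n : ℕ) {s : ℝ} (hs : 0 < s) :
    ∫ t in Ioi (0 : ℝ), t ^ n * exp (-s * t) = n ! / s ^ (n + 1) := by
  have h := integral_rpow_mul_exp_neg_mul_Ioi (a := n + 1) (by positivity) hs
  rw [add_sub_cancel_right, Gamma_nat_eq_factorial, ← Nat.cast_add_one] at h
  simp only [rpow_natCast] at h
  simp only [neg_mul, h, one_div, inv_pow, inv_mul_eq_div]

theorem integrableOn_Ioi_pow_mul_exp_neg_mul (n : ℕ) {s : ℝ} (hs : 0 < s) :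
    IntegrableOn (fun t : ℝ => t ^ n * exp (-s * t)) (Ioi 0) := by
  have hn : (-1 : ℝ) < n := by linarith [n.cast_nonneg (α := ℝ)]
  refine (integrableOn_rpow_mul_exp_neg_mul_rpow hn one_pos hs).congr_fun (fun t _ => ?_)
    measurableSet_Ioi
  simp only [rpow_one, rpow_natCast, neg_mul]

theorem rpow_div_two_mul_sqrt_mul_pow {mu lam : ℝ} (hmu : 0 ≤ mu) (hlam : 0 < lam) (k ℓ : ℕ) :
    (mu / lam) ^ ((k : ℝ) / 2) * sqrt (mu * lam) ^ (2 * ℓ + k) = mu ^ (ℓ + k) * lam ^ ℓ := by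
  have hsqrt : sqrt (mu / lam) * sqrt (mu * lam) = mu := by
    rw [← sqrt_mul (by positivity), show mu / lam * (mu * lam) = mu ^ 2 by field_simp,
      sqrt_sq hmu]
  rw [rpow_div_two_eq_sqrt _ (by positivity), rpow_natCast, pow_add, pow_mul,
    sq_sqrt (by positivity), mul_left_comm, ← mul_pow, hsqrt, mul_pow, pow_add]
  ring

/-- The `ℓ`-th term of the series expansion of the density of order `k + 1`. -/
noncomputable def besselDensityTerm (k : ℕ) (mu lam : ℝ) (ℓ : ℕ) (t : ℝ) : ℝ :=
  (k + 1) * mu ^ (ℓ + k + 1) * lam ^ ℓ / ((ℓ + k + 1)! * ℓ !) *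
    (t ^ (2 * ℓ + k) * exp (-(mu + lam) * t))

theorem besselDensity_eq_tsum (k : ℕ) {mu lam : ℝ} (hmu : 0 ≤ mu) (hlam : 0 < lam) {t : ℝ}
    (ht : 0 < t) :
    (mu / lam) ^ (((k + 1 : ℕ) : ℝ) / 2) * exp (-(mu + lam) * t) * (((k + 1 : ℕ) : ℝ) / t) *
      besselI (k + 1) (2 * sqrt (mu * lam) * t) = ∑' ℓ, besselDensityTerm k mu lam ℓ t := by
  rw [besselI, ← tsum_mul_left]
  refine tsum_congr fun ℓ => ?_
  have hpow := rpow_div_two_mul_sqrt_mul_pow hmu hlam (k + 1) ℓ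
  simp only [← add_assoc] at hpow ⊢
  rw [besselDensityTerm, show 2 * sqrt (mu * lam) * t / 2 = sqrt (mu * lam) * t by ring, mul_pow,
    pow_succ t]
  field_simp
  rw [mul_assoc, hpow]
  push_cast
  ring

theorem integral_besselDensityTerm (k : ℕ) {mu lam : ℝ} (hs : 0 < mu + lam) (ℓ : ℕ) :
    ∫ t in Ioi (0 : ℝ), besselDensityTerm k mu lam ℓ t =
      firstPassageProb (mu / (mu + lam)) (lam / (mu + lam)) (k + 1) ℓ := by
  simp only [besselDensityTerm]
  rw [integral_const_mul, integral_Ioi_pow_mul_exp_neg_mul _ hs, firstPassageProb, div_pow,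
    div_pow]
  field_simp
  ring

theorem integrableOn_besselDensityTerm (k : ℕ) {mu lam : ℝ} (hs : 0 < mu + lam) (ℓ : ℕ) :
    IntegrableOn (besselDensityTerm k mu lam ℓ) (Ioi 0) :=
  (integrableOn_Ioi_pow_mul_exp_neg_mul _ hs).const_mul _

theorem besselDensityTerm_nonneg (k : ℕ) {mu lam : ℝ} (hmu : 0 ≤ mu) (hlam : 0 ≤ lam) (ℓ : ℕ)
    {t : ℝ} (ht : 0 ≤ t) : 0 ≤ besselDensityTerm k mu lam ℓ t := by
  unfold besselDensityTerm; positivity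

/-- For an integer `k ≥ 1` and `0 < λ ≤ μ`,
`∫_0^∞ (μ/λ)^(k/2) e^{-(μ+λ)t} (k/t) I_k(2√(μλ) t) dt = 1`; in particular this function
is a probability density on `(0,∞)`. -/
theorem besselI_density_integral_eq_one
    (k : ℕ) (hk : 1 ≤ k) (lam mu : ℝ) (hlam : 0 < lam) (hlammu : lam ≤ mu) :
    ∫ t in Set.Ioi (0:ℝ),
        (mu / lam) ^ ((k : ℝ) / 2) * Real.exp (-(mu + lam) * t) * ((k : ℝ) / t) *
          besselI k (2 * Real.sqrt (mu * lam) * t) = 1 := by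
  obtain ⟨j, rfl⟩ : ∃ j, k = j + 1 := ⟨k - 1, by omega⟩
  have hmu : 0 < mu := hlam.trans_le hlammu
  have hs : 0 < mu + lam := by positivity
  have hq : 0 < lam / (mu + lam) := by positivity
  have hqp : lam / (mu + lam) ≤ mu / (mu + lam) := by gcongr
  have hpq : mu / (mu + lam) + lam / (mu + lam) = 1 := by rw [← add_div, div_self hs.ne']
  set p := mu / (mu + lam)
  set q := lam / (mu + lam)
  have hone := firstPassageProb.hasSum_one hq hqp hpq (j + 1)
  have hnorm (ℓ : ℕ) :
      ∫ t in Ioi (0 : ℝ), ‖besselDensityTerm j mu lam ℓ t‖ = firstPassageProb p q (j + 1) ℓ := by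
    rw [← integral_besselDensityTerm j hs ℓ]
    refine setIntegral_congr_fun measurableSet_Ioi fun t ht => ?_
    exact Real.norm_of_nonneg (besselDensityTerm_nonneg j hmu.le hlam.le ℓ (le_of_lt ht))
  have hintegral : HasSum (firstPassageProb p q (j + 1))
      (∫ t in Ioi (0 : ℝ), ∑' ℓ, besselDensityTerm j mu lam ℓ t) := by
    simpa only [integral_besselDensityTerm j hs] using hasSum_integral_of_summable_integral_norm
      (fun ℓ => integrableOn_besselDensityTerm j hs ℓ) (by simpa only [hnorm] using hone.summable)
  rw [setIntegral_congr_fun measurableSet_Ioi fun t ht => besselDensity_eq_tsum j hmu.le hlam ht]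
  exact hintegral.unique hone
end

section
/- Let 0 < λ < μ and let s ≥ 0. Then ∫_0^∞ e^{-st} √(μ/λ) e^{-(μ+λ)t} (1/t) I_1(2√(μλ) t) dt = 2μ / (√((s + μ + λ)^2 - 4μλ) + s + μ + λ). In particular, taking s = 0 the integral equals 1. -/
/-!
Expand `I₁` in its power series and integrate term by term against `e^{-pt}`, `p = s + μ + λ`.
With `A = √(μλ)`, the `n`-th term contributes `(2n)! / ((n+1)! n!) · (A/p)^(2n+1)`, and the
coefficient is the Catalan number `Cₙ`. The integral is therefore `√(μ/λ) · (A/p) · C((A/p)²)`,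
where `C(x) = ∑ Cₙ xⁿ` satisfies `x C² - C + 1 = 0` by the Catalan recursion; continuity in `x`
selects the root `C(x) = 2 / (1 + √(1 - 4x))`.
-/

open MeasureTheory

open Finset Real Nat

theorem catalan_le_four_pow (n : ℕ) : catalan n ≤ 4 ^ n :=
  calc catalan n ≤ (n + 1) * catalan n := Nat.le_mul_of_pos_left _ n.succ_pos
    _ = n.centralBinom := succ_mul_catalan_eq_centralBinom n
    _ ≤ 4 ^ n := centralBinom_le_four_pow n

theorem catalan_mul_factorial_succ_mul_factorial (n : ℕ) :
    catalan n * (n + 1)! * n ! = (2 * n)! := by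
  have h := choose_mul_factorial_mul_factorial (show n ≤ 2 * n by omega)
  rw [show 2 * n - n = n by omega, ← centralBinom_eq_two_mul_choose,
    ← succ_mul_catalan_eq_centralBinom] at h
  rw [← h, factorial_succ]
  ring

theorem norm_catalan_mul_pow_le (n : ℕ) (x : ℝ) :
    ‖(catalan n : ℝ) * x ^ n‖ ≤ (4 * |x|) ^ n := by
  rw [norm_mul, norm_pow, Real.norm_natCast, Real.norm_eq_abs, mul_pow]
  gcongr
  exact_mod_cast catalan_le_four_pow n

theorem summable_norm_catalan_mul_pow {x : ℝ} (hx : |x| < 1 / 4) :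
    Summable fun n ↦ ‖(catalan n : ℝ) * x ^ n‖ :=
  .of_nonneg_of_le (fun _ ↦ norm_nonneg _) (fun n ↦ norm_catalan_mul_pow_le n x)
    (summable_geometric_of_lt_one (by positivity) (by linarith))

theorem mul_tsum_catalan_mul_pow_sq_add_one {x : ℝ} (hx : |x| < 1 / 4) :
    x * (∑' n, (catalan n : ℝ) * x ^ n) ^ 2 + 1 = ∑' n, (catalan n : ℝ) * x ^ n := by
  have hs := summable_norm_catalan_mul_pow hx
  have cauchy_product :
      (∑' n, (catalan n : ℝ) * x ^ n) ^ 2 = ∑' n, (catalan (n + 1) : ℝ) * x ^ n := by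
    rw [sq, tsum_mul_tsum_eq_tsum_sum_antidiagonal_of_summable_norm hs hs]
    refine tsum_congr fun n ↦ ?_
    rw [catalan_succ', Nat.cast_sum, sum_mul]
    refine sum_congr rfl fun ij hij ↦ ?_
    rw [← mem_antidiagonal.mp hij]
    push_cast
    ring
  rw [cauchy_product, ← tsum_mul_left, hs.of_norm.tsum_eq_zero_add]
  simp only [catalan_zero, Nat.cast_one, pow_zero, mul_one, pow_succ]
  rw [add_comm]
  congr 1
  exact tsum_congr fun n ↦ by ring

theorem tsum_catalan_mul_pow {x : ℝ} (hx : |x| < 1 / 4) :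
    ∑' n, (catalan n : ℝ) * x ^ n = 2 / (1 + √(1 - 4 * x)) := by
  set g : ℝ → ℝ := fun y ↦ ∑' n, (catalan n : ℝ) * y ^ n
  have h_abs : ∀ y ∈ Set.uIcc 0 x, |y| < 1 / 4 := fun y hy ↦
    (by simpa using Set.abs_sub_left_of_mem_uIcc hy : |y| ≤ |x|).trans_lt hx
  have hg_cont : ContinuousOn g (Set.uIcc 0 x) :=
    continuousOn_tsum (fun n ↦ by fun_prop)
      (summable_geometric_of_lt_one (by positivity) (by linarith : 4 * |x| < 1))
      fun n y hy ↦ (norm_catalan_mul_pow_le n y).trans <| pow_le_pow_left₀ (by positivity)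
        (by simpa using Set.abs_sub_left_of_mem_uIcc hy) n
  have h_sq : ∀ y ∈ Set.uIcc 0 x, (2 * y * g y - 1) ^ 2 = 1 - 4 * y := fun y hy ↦ by
    linear_combination 4 * y * mul_tsum_catalan_mul_pow_sq_add_one (h_abs y hy)
  -- `2 y g(y) - 1` is continuous, starts at `-1` and never vanishes, so it stays negative.
  have h_neg : 2 * x * g x - 1 < 0 := by
    by_contra! h
    obtain ⟨c, hc, hc0⟩ := intermediate_value_uIcc (f := fun y ↦ 2 * y * g y - 1)
      (by fun_prop) (show (0 : ℝ) ∈ Set.uIcc (2 * 0 * g 0 - 1) (2 * x * g x - 1) by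
        simp only [mul_zero, zero_mul, zero_sub, Set.mem_uIcc]
        exact Or.inl ⟨by norm_num, h⟩)
    have := h_sq c hc
    rw [show 2 * c * g c - 1 = 0 from hc0] at this
    linarith [abs_lt.mp (h_abs c hc)]
  have h_sqrt : √(1 - 4 * x) = 1 - 2 * x * g x := by
    rw [← h_sq x Set.right_mem_uIcc, sqrt_sq_eq_abs, abs_of_neg h_neg]
    ring
  rw [eq_div_iff (by positivity), h_sqrt]
  linear_combination -2 * mul_tsum_catalan_mul_pow_sq_add_one hx

theorem integral_pow_mul_exp_neg_mul_Ioi {p : ℝ} (hp : 0 < p) (n : ℕ) :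
    ∫ t in Set.Ioi 0, t ^ n * exp (-(p * t)) = n ! / p ^ (n + 1) := by
  have h := integral_rpow_mul_exp_neg_mul_Ioi (a := n + 1) (by positivity) hp
  rw [add_sub_cancel_right, Gamma_nat_eq_factorial, ← Nat.cast_succ, rpow_natCast,
    div_pow, one_pow, one_div_mul_eq_div] at h
  rw [← h]
  exact setIntegral_congr_fun measurableSet_Ioi fun t _ ↦ by simp [rpow_natCast]

noncomputable def besselLaplaceTerm (A p : ℝ) (n : ℕ) (t : ℝ) : ℝ :=
  A ^ (2 * n + 1) / ((n + 1)! * n !) * (t ^ (2 * n) * exp (-(p * t)))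

theorem exp_neg_mul_mul_one_div_mul_besselI_one (A p : ℝ) {t : ℝ} (ht : t ≠ 0) :
    exp (-(p * t)) * (1 / t * besselI 1 (2 * A * t)) = ∑' n, besselLaplaceTerm A p n t := by
  simp only [besselI, besselLaplaceTerm, ← tsum_mul_left]
  refine tsum_congr fun n ↦ ?_
  rw [show 2 * A * t / 2 = A * t by ring, mul_pow, pow_succ t]
  field_simp

theorem norm_besselLaplaceTerm (A p : ℝ) (n : ℕ) (t : ℝ) :
    ‖besselLaplaceTerm A p n t‖ = besselLaplaceTerm |A| p n t := by
  simp only [besselLaplaceTerm, norm_mul, norm_div, norm_pow, Real.norm_eq_abs, abs_exp,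
    pow_mul, sq_abs, Nat.abs_cast]

theorem integral_besselLaplaceTerm (A : ℝ) {p : ℝ} (hp : 0 < p) (n : ℕ) :
    ∫ t in Set.Ioi 0, besselLaplaceTerm A p n t = A / p * (catalan n * ((A / p) ^ 2) ^ n) := by
  simp only [besselLaplaceTerm]
  rw [integral_const_mul, integral_pow_mul_exp_neg_mul_Ioi hp,
    ← catalan_mul_factorial_succ_mul_factorial, ← pow_mul, div_pow]
  push_cast
  field_simp
  ring

theorem integral_exp_neg_mul_mul_one_div_mul_besselI_one {A p : ℝ} (hAp : 2 * |A| < p) :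
    ∫ t in Set.Ioi 0, exp (-(p * t)) * (1 / t * besselI 1 (2 * A * t)) =
      2 * A / (p + √(p ^ 2 - 4 * A ^ 2)) := by
  have hp : 0 < p := by linarith [abs_nonneg A]
  have hx : |(A / p) ^ 2| < 1 / 4 := by
    rw [abs_pow, abs_div, abs_of_pos hp, div_pow, div_lt_iff₀ (by positivity)]
    nlinarith [abs_nonneg A]
  have h_int : ∀ n, Integrable (besselLaplaceTerm A p n) (volume.restrict (Set.Ioi 0)) :=
    fun n ↦ (Integrable.of_integral_ne_zero (by
      rw [integral_pow_mul_exp_neg_mul_Ioi hp]; positivity)).const_mul _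
  have h_sum : Summable fun n ↦ ∫ t in Set.Ioi 0, ‖besselLaplaceTerm A p n t‖ := by
    simp only [norm_besselLaplaceTerm, integral_besselLaplaceTerm |A| hp]
    have hx_abs : |(|A| / p) ^ 2| < 1 / 4 := by rwa [div_pow, sq_abs, ← div_pow]
    exact (summable_norm_catalan_mul_pow hx_abs).of_norm.mul_left _
  rw [setIntegral_congr_fun measurableSet_Ioi fun t ht ↦
      exp_neg_mul_mul_one_div_mul_besselI_one A p (ne_of_gt ht),
    ← integral_tsum_of_summable_integral_norm h_int h_sum]
  simp only [integral_besselLaplaceTerm A hp]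
  rw [tsum_mul_left, tsum_catalan_mul_pow hx]
  have h_sqrt : √(1 - 4 * (A / p) ^ 2) = √(p ^ 2 - 4 * A ^ 2) / p := by
    rw [show 1 - 4 * (A / p) ^ 2 = (p ^ 2 - 4 * A ^ 2) / p ^ 2 by field_simp,
      sqrt_div' _ (sq_nonneg p), sqrt_sq hp.le]
  rw [h_sqrt]
  field_simp

/-- For `0 < λ < μ` and `s ≥ 0`,
`∫_0^∞ e^{-st} √(μ/λ) e^{-(μ+λ)t} (1/t) I_1(2√(μλ) t) dt`
`= 2μ/(√((s+μ+λ)² - 4μλ) + s + μ + λ)`. -/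
theorem mgf_survival_time
    (lam mu : ℝ) (hlam : 0 < lam) (hlammu : lam < mu) (s : ℝ) (hs : 0 ≤ s) :
    ∫ t in Set.Ioi (0:ℝ),
        Real.exp (-s * t) * Real.sqrt (mu / lam) * Real.exp (-(mu + lam) * t) * (1 / t) *
          besselI 1 (2 * Real.sqrt (mu * lam) * t) =
      2 * mu / (Real.sqrt ((s + mu + lam) ^ 2 - 4 * mu * lam) + s + mu + lam) := by
  have hmu : 0 < mu := hlam.trans hlammu
  set A := √(mu * lam)
  have hA_sq : A ^ 2 = mu * lam := sq_sqrt (by positivity)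
  have hA_lt : 2 * |A| < s + mu + lam := by
    rw [abs_of_nonneg (sqrt_nonneg _)]
    nlinarith [sqrt_nonneg (mu * lam)]
  have h_mu : √(mu / lam) * A = mu := by
    rw [← sqrt_mul (by positivity), show mu / lam * (mu * lam) = mu ^ 2 by field_simp,
      sqrt_sq hmu.le]
  have h_integrand : ∀ t, exp (-s * t) * √(mu / lam) * exp (-(mu + lam) * t) * (1 / t) *
      besselI 1 (2 * A * t) =
        √(mu / lam) * (exp (-((s + mu + lam) * t)) * (1 / t * besselI 1 (2 * A * t))) := by
    intro t
    rw [show -((s + mu + lam) * t) = -s * t + -(mu + lam) * t by ring, exp_add]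
    ring
  simp_rw [h_integrand]
  rw [integral_const_mul, integral_exp_neg_mul_mul_one_div_mul_besselI_one hA_lt, hA_sq,
    mul_div_assoc', mul_left_comm, h_mu]
  ring_nf
end
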